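/- arXiv:1412.4455 — 3 statements merged into one kernel-verified Lean document; each statement's English description precedes it below -/
import Mathlib

section
/- Constancy of phase along gradient flow lines of the square modulus of a holomorphic function (the paper's proposition that Arg Z_γ is constant along gradient flow lines of F_γ = |Z_γ|²): Let U ⊆ ℂ be open, let f : U → ℂ be holomorphic and nowhere vanishing on U, and let y : I → U be a differentiable curve on an interval I containing t₀ satisfying the gradient flow equation y′(t) = 2·f(y(t))·conj(f′(y(t))) for all t ∈ I (the right-hand side is the gradient of |f|² under the identification ℂ ≅ ℝ²). Then for every t ∈ I there exists a real number c(t) > 0 such that f(y(t)) = c(t)·f(y(t₀)); in particular the argument of f(y(t)) is constant in t. -/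
/-- **Constancy of phase along gradient flow lines of `|f|²`.**  Let `U ⊆ ℂ` be
open, `f` holomorphic and nowhere vanishing on `U`, and let `y : I → U` be a
differentiable curve on an interval `I ∋ t₀` satisfying the gradient flow
equation `y′(t) = 2·f(y(t))·conj(f′(y(t)))` for all `t ∈ I`.  Then for every
`t ∈ I` there is a real `c(t) > 0` with `f(y(t)) = c(t)·f(y(t₀))`; in
particular the argument of `f(y(t))` is constant in `t`. -/
theorem phase_constant_along_gradient_flow
    {U : Set ℂ} (hU : IsOpen U) (f : ℂ → ℂ)
    (hf : DifferentiableOn ℂ f U) (hf0 : ∀ z ∈ U, f z ≠ 0)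
    {I : Set ℝ} (hI : I.OrdConnected) {t₀ : ℝ} (ht₀ : t₀ ∈ I)
    (y : ℝ → ℂ) (hy : ∀ t ∈ I, y t ∈ U)
    (hflow : ∀ t ∈ I,
      HasDerivAt y (2 * f (y t) * (starRingEnd ℂ) (deriv f (y t))) t) :
    ∀ t ∈ I, ∃ c : ℝ, 0 < c ∧ f (y t) = (c : ℂ) * f (y t₀) := by
  have hIconv : Convex ℝ I := convex_iff_ordConnected.mpr hI
  set g : ℝ → ℂ := fun u => f (y u) with hg_def
  set r : ℝ → ℝ := fun u => 2 * Complex.normSq (deriv f (y u)) with hr_def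
  set n : ℝ → ℝ := fun u => Complex.normSq (f (y u)) with hn_def
  -- derivative of g along the flow
  have hgd : ∀ s ∈ I, HasDerivAt g ((r s : ℝ) • g s) s := by
    intro s hs
    have hfd : HasDerivAt f (deriv f (y s)) (y s) :=
      (hf.differentiableAt (hU.mem_nhds (hy s hs))).hasDerivAt
    have hcomp := hfd.scomp s (hflow s hs)
    have hval : (2 * f (y s) * (starRingEnd ℂ) (deriv f (y s))) • deriv f (y s)
        = (r s : ℝ) • g s := by
      rw [Complex.real_smul, smul_eq_mul]
      push_cast [hr_def, hg_def]
      rw [← Complex.mul_conj]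
      ring
    rw [hval] at hcomp
    exact hcomp
  -- positivity of n
  have hnpos : ∀ s ∈ I, 0 < n s := fun s hs =>
    Complex.normSq_pos.mpr (hf0 _ (hy s hs))
  -- derivative of n
  have hnd : ∀ s ∈ I, HasDerivAt n (2 * r s * n s) s := by
    intro s hs
    have hre : HasDerivAt (fun u => (g u).re) (((r s : ℝ) • g s).re) s :=
      Complex.reCLM.hasFDerivAt.comp_hasDerivAt s (hgd s hs)
    have him : HasDerivAt (fun u => (g u).im) (((r s : ℝ) • g s).im) s :=
      Complex.imCLM.hasFDerivAt.comp_hasDerivAt s (hgd s hs)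
    have h1 := (hre.mul hre).add (him.mul him)
    have hfun : (fun u => (g u).re * (g u).re + (g u).im * (g u).im) = n := by
      funext u
      simp [hn_def, hg_def, Complex.normSq_apply]
    rw [show (((fun u => (g u).re) * fun u => (g u).re) + (fun u => (g u).im) * fun u => (g u).im) = n from hfun] at h1
    convert h1 using 1
    show 2 * r s * Complex.normSq (g s) = _
    rw [Complex.normSq_apply, Complex.smul_re, Complex.smul_im, smul_eq_mul, smul_eq_mul]
    ring
    all_goals rfl
  -- the normalized phase function has zero derivative
  set q : ℝ → ℂ := fun u => (Real.sqrt (n u))⁻¹ • g u with hq_def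
  have hqd : ∀ s ∈ I, HasDerivWithinAt q (0 : ℂ) I s := by
    intro s hs
    have hns := hnpos s hs
    have hsne : Real.sqrt (n s) ≠ 0 := (Real.sqrt_pos.mpr hns).ne'
    have hsqrt : HasDerivAt (fun u => Real.sqrt (n u))
        (2 * r s * n s / (2 * Real.sqrt (n s))) s := (hnd s hs).sqrt hns.ne'
    have hinv : HasDerivAt (fun u => (Real.sqrt (n u))⁻¹)
        (-(2 * r s * n s / (2 * Real.sqrt (n s))) / (Real.sqrt (n s)) ^ 2) s :=
      hsqrt.inv hsne
    have hq := hinv.smul (hgd s hs)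
    have hval : (Real.sqrt (n s))⁻¹ • ((r s : ℝ) • g s)
        + (-(2 * r s * n s / (2 * Real.sqrt (n s))) / (Real.sqrt (n s)) ^ 2) • g s
        = (0 : ℂ) := by
      rw [smul_smul, ← add_smul]
      convert zero_smul ℝ (g s)
      have hsq : Real.sqrt (n s) * Real.sqrt (n s) = n s := Real.mul_self_sqrt hns.le
      field_simp
      rw [Real.sq_sqrt hns.le]; ring
    rw [hval] at hq
    exact hq.hasDerivWithinAt
  -- q is constant on I
  have hqconst : ∀ t ∈ I, q t = q t₀ := by
    intro t ht
    have hb := hIconv.norm_image_sub_le_of_norm_hasDerivWithin_le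
      (f' := fun _ => (0 : ℂ)) (C := 0) hqd (fun x _ => by simp) ht₀ ht
    have : ‖q t - q t₀‖ ≤ 0 := by simpa using hb
    have := le_antisymm this (norm_nonneg _)
    rwa [norm_eq_zero, sub_eq_zero] at this
  -- conclude
  intro t ht
  have hq' := hqconst t ht
  have hnt := hnpos t ht
  have hnt₀ := hnpos t₀ ht₀
  refine ⟨Real.sqrt (n t) / Real.sqrt (n t₀),
    div_pos (Real.sqrt_pos.mpr hnt) (Real.sqrt_pos.mpr hnt₀), ?_⟩
  have h1 : g t = Real.sqrt (n t) • q t := by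
    rw [hq_def]
    rw [smul_smul, mul_inv_cancel₀ (Real.sqrt_pos.mpr hnt).ne', one_smul]
  have h2 : g t = (Real.sqrt (n t) * (Real.sqrt (n t₀))⁻¹) • g t₀ := by
    rw [h1, hq', hq_def, smul_smul]
  show g t = _
  rw [h2, Complex.real_smul]
  push_cast
  ring
end

section
/- The Kontsevich–Soibelman pentagon identity (identity derived in Example 3.21 / Example 65 of the paper): In the formal power series ring ℚ[[x,y]], let θ₁, θ₂, θ₁₂ be the substitution ℚ-algebra endomorphisms determined by: θ₁ sends x ↦ x and y ↦ y·(1+x); θ₂ sends x ↦ x·(1+y)⁻¹ and y ↦ y; θ₁₂ sends x ↦ x·(1+x·y)⁻¹ and y ↦ y·(1+x·y). (Here (1+x), (1+y), (1+xy) are units of ℚ[[x,y]], and each substitution assigns to the variables power series with zero constant term, so the corresponding substitution endomorphism is well defined.) Then θ₁ ∘ θ₂ = θ₂ ∘ θ₁₂ ∘ θ₁ as endomorphisms of ℚ[[x,y]]. -/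
/-- A `ℚ`-algebra endomorphism `θ` of `ℚ[[x,y]] = MvPowerSeries (Fin 2) ℚ` is
*continuous for the `(x,y)`-adic topology* precisely when each coefficient of
`θ f` only depends on a (total-degree) truncation of `f`; this is automatic for
substitution endomorphisms whose variable images have zero constant term. -/
def AdicContinuous
    (θ : MvPowerSeries (Fin 2) ℚ →ₐ[ℚ] MvPowerSeries (Fin 2) ℚ) : Prop :=
  ∀ (f : MvPowerSeries (Fin 2) ℚ) (m : Fin 2 →₀ ℕ) (n : ℕ),
    m 0 + m 1 < n →
    MvPowerSeries.coeff m (θ f) =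
      MvPowerSeries.coeff m
        (θ ((MvPowerSeries.trunc ℚ (Finsupp.equivFunOnFinite.symm fun _ => n) f :
              MvPolynomial (Fin 2) ℚ) : MvPowerSeries (Fin 2) ℚ))

noncomputable abbrev Pentagon.Nf (n : ℕ) : Fin 2 →₀ ℕ :=
  Finsupp.equivFunOnFinite.symm fun _ => n

namespace Pentagon

lemma sumbound {m : Fin 2 →₀ ℕ} {n : ℕ} (h : m < Nf n) : m 0 + m 1 < 2 * n := by
  have h0 : m 0 ≤ n := by simpa using Finsupp.le_def.mp h.le 0
  have h1 : m 1 ≤ n := by simpa using Finsupp.le_def.mp h.le 1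
  have hne : m ≠ Nf n := h.ne
  have : m 0 ≠ n ∨ m 1 ≠ n := by
    by_contra hc
    push_neg at hc
    apply hne
    ext i
    fin_cases i <;> simp [Nf, hc.1, hc.2]
  omega

/-- truncation of `φ f` at level `n` only depends on the truncation of `f` at level `2n`. -/
lemma trunc_apply (φ : MvPowerSeries (Fin 2) ℚ →ₐ[ℚ] MvPowerSeries (Fin 2) ℚ)
    (hφ : AdicContinuous φ) (f : MvPowerSeries (Fin 2) ℚ) (n : ℕ) :
    MvPowerSeries.trunc ℚ (Nf n) (φ f) =
      MvPowerSeries.trunc ℚ (Nf n)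
        (φ ((MvPowerSeries.trunc ℚ (Nf (2 * n)) f : MvPolynomial (Fin 2) ℚ) :
            MvPowerSeries (Fin 2) ℚ)) := by
  apply MvPolynomial.ext
  intro m
  rw [MvPowerSeries.coeff_trunc, MvPowerSeries.coeff_trunc]
  split_ifs with h
  · exact hφ f m (2 * n) (sumbound h)
  · rfl

lemma coeff_pair (φ ψ : MvPowerSeries (Fin 2) ℚ →ₐ[ℚ] MvPowerSeries (Fin 2) ℚ)
    (hφ : AdicContinuous φ) (hψ : AdicContinuous ψ)
    (f : MvPowerSeries (Fin 2) ℚ) (m : Fin 2 →₀ ℕ) (n : ℕ) (h : m 0 + m 1 < n) :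
    MvPowerSeries.coeff m (φ (ψ f)) =
      MvPowerSeries.coeff m
        (φ (ψ ((MvPowerSeries.trunc ℚ (Nf (2 * n)) f : MvPolynomial (Fin 2) ℚ) :
            MvPowerSeries (Fin 2) ℚ))) := by
  rw [hφ (ψ f) m n h,
    hφ (ψ ((MvPowerSeries.trunc ℚ (Nf (2 * n)) f : MvPolynomial (Fin 2) ℚ) :
        MvPowerSeries (Fin 2) ℚ)) m n h,
    trunc_apply ψ hψ f n]

end Pentagon

open Pentagon in
/-- **The Kontsevich–Soibelman pentagon identity** (Example 65 of the paper).
In `ℚ[[x,y]]`, let `θ₁, θ₂, θ₁₂` be the substitution `ℚ`-algebra endomorphisms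
(i.e. the continuous `ℚ`-algebra endomorphisms) determined by:
`θ₁ : x ↦ x, y ↦ y·(1+x)`; `θ₂ : x ↦ x·(1+y)⁻¹, y ↦ y`;
`θ₁₂ : x ↦ x·(1+xy)⁻¹, y ↦ y·(1+xy)`.  Then `θ₁ ∘ θ₂ = θ₂ ∘ θ₁₂ ∘ θ₁`. -/
theorem pentagon_identity
    (u v w : (MvPowerSeries (Fin 2) ℚ)ˣ)
    (hu : (u : MvPowerSeries (Fin 2) ℚ) = 1 + MvPowerSeries.X 0)
    (hv : (v : MvPowerSeries (Fin 2) ℚ) = 1 + MvPowerSeries.X 1)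
    (hw : (w : MvPowerSeries (Fin 2) ℚ)
      = 1 + MvPowerSeries.X 0 * MvPowerSeries.X 1)
    (θ₁ θ₂ θ₁₂ : MvPowerSeries (Fin 2) ℚ →ₐ[ℚ] MvPowerSeries (Fin 2) ℚ)
    (hθ₁c : AdicContinuous θ₁) (hθ₂c : AdicContinuous θ₂)
    (hθ₁₂c : AdicContinuous θ₁₂)
    (hθ₁x : θ₁ (MvPowerSeries.X 0) = MvPowerSeries.X 0)
    (hθ₁y : θ₁ (MvPowerSeries.X 1)
      = MvPowerSeries.X 1 * (u : MvPowerSeries (Fin 2) ℚ))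
    (hθ₂x : θ₂ (MvPowerSeries.X 0)
      = MvPowerSeries.X 0 * ((v⁻¹ : (MvPowerSeries (Fin 2) ℚ)ˣ) : MvPowerSeries (Fin 2) ℚ))
    (hθ₂y : θ₂ (MvPowerSeries.X 1) = MvPowerSeries.X 1)
    (hθ₁₂x : θ₁₂ (MvPowerSeries.X 0)
      = MvPowerSeries.X 0 * ((w⁻¹ : (MvPowerSeries (Fin 2) ℚ)ˣ) : MvPowerSeries (Fin 2) ℚ))
    (hθ₁₂y : θ₁₂ (MvPowerSeries.X 1)
      = MvPowerSeries.X 1 * (w : MvPowerSeries (Fin 2) ℚ)) :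
    θ₁.comp θ₂ = θ₂.comp (θ₁₂.comp θ₁) := by
  classical
  set X0 : MvPowerSeries (Fin 2) ℚ := MvPowerSeries.X 0 with hX0
  set X1 : MvPowerSeries (Fin 2) ℚ := MvPowerSeries.X 1 with hX1
  -- abbreviations for the inverse units and their defining equations
  set A : MvPowerSeries (Fin 2) ℚ := θ₁ ((v⁻¹ : (MvPowerSeries (Fin 2) ℚ)ˣ) :
    MvPowerSeries (Fin 2) ℚ) with hA
  set B : MvPowerSeries (Fin 2) ℚ := ((v⁻¹ : (MvPowerSeries (Fin 2) ℚ)ˣ) :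
    MvPowerSeries (Fin 2) ℚ) with hB
  set C : MvPowerSeries (Fin 2) ℚ := θ₂ ((w⁻¹ : (MvPowerSeries (Fin 2) ℚ)ˣ) :
    MvPowerSeries (Fin 2) ℚ) with hC
  set D : MvPowerSeries (Fin 2) ℚ := ((w⁻¹ : (MvPowerSeries (Fin 2) ℚ)ˣ) :
    MvPowerSeries (Fin 2) ℚ) with hD
  have hvB : (1 + X1) * B = 1 := by
    rw [hB, ← hv, ← Units.val_mul, mul_inv_cancel, Units.val_one]
  have hθ₁v : θ₁ (v : MvPowerSeries (Fin 2) ℚ) = 1 + X1 * (1 + X0) := by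
    rw [hv, map_add, map_one, hθ₁y, hu]
  have hsA : (1 + X1 * (1 + X0)) * A = 1 := by
    rw [← hθ₁v, hA, ← map_mul, ← Units.val_mul, mul_inv_cancel, Units.val_one, map_one]
  have hθ₂w : θ₂ (w : MvPowerSeries (Fin 2) ℚ) = 1 + X0 * B * X1 := by
    rw [hw, map_add, map_one, map_mul, hθ₂x, hθ₂y]
  have htC : (1 + X0 * B * X1) * C = 1 := by
    rw [← hθ₂w, hC, ← map_mul, ← Units.val_mul, mul_inv_cancel, Units.val_one, map_one]
  have hwD : (1 + X0 * X1) * D = 1 := by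
    rw [hD, ← hw, ← Units.val_mul, mul_inv_cancel, Units.val_one]
  -- agreement on the variables
  have agreeX : ∀ i : Fin 2,
      θ₁ (θ₂ (MvPowerSeries.X i)) = θ₂ (θ₁₂ (θ₁ (MvPowerSeries.X i))) := by
    intro i
    fin_cases i
    · show θ₁ (θ₂ X0) = θ₂ (θ₁₂ (θ₁ X0))
      simp only [map_mul, hθ₂x, hθ₁x, hθ₁₂x, ← hA, ← hC]
      linear_combination (X0 * B * C) * hsA - (X0 * A * C) * hvB - (X0 * A) * htC
    · show θ₁ (θ₂ X1) = θ₂ (θ₁₂ (θ₁ X1))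
      simp only [map_mul, map_add, map_one, hθ₂y, hθ₁y, hθ₁₂y, hθ₁₂x, hθ₂x, hθ₂w, hu, ← hC]
      linear_combination (-(X1 * X0 * B)) * htC + (-(X1 * X0)) * hvB
  -- agreement on (coercions of) polynomials
  have key : ∀ Q : MvPolynomial (Fin 2) ℚ,
      θ₁ (θ₂ (Q : MvPowerSeries (Fin 2) ℚ)) = θ₂ (θ₁₂ (θ₁ (Q : MvPowerSeries (Fin 2) ℚ))) := by
    intro Q
    induction Q using MvPolynomial.induction_on with
    | C a =>
        rw [MvPolynomial.coe_C, MvPowerSeries.c_eq_algebraMap]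
        simp [AlgHom.commutes]
    | add p q hp hq =>
        rw [MvPolynomial.coe_add]
        simp only [map_add, hp, hq]
    | mul_X p i hp =>
        rw [MvPolynomial.coe_mul, MvPolynomial.coe_X]
        simp only [map_mul, hp, agreeX i]
  -- conclude by continuity
  apply AlgHom.ext
  intro f
  apply MvPowerSeries.ext
  intro m
  set n : ℕ := m 0 + m 1 + 1 with hn
  have h1 : m 0 + m 1 < n := by omega
  have h2 : m 0 + m 1 < 2 * n := by omega
  have L := coeff_pair θ₁ θ₂ hθ₁c hθ₂c f m (2 * n) h2
  have R1 := coeff_pair θ₂ θ₁₂ hθ₂c hθ₁₂c (θ₁ f) m n h1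
  have R2 := trunc_apply θ₁ hθ₁c f (2 * n)
  have R3 := coeff_pair θ₂ θ₁₂ hθ₂c hθ₁₂c
    (θ₁ ((MvPowerSeries.trunc ℚ (Nf (2 * (2 * n))) f : MvPolynomial (Fin 2) ℚ) :
        MvPowerSeries (Fin 2) ℚ)) m n h1
  simp only [AlgHom.comp_apply]
  rw [L, R1, R2, ← R3, key]
end

section
/- Commutativity of Kontsevich–Soibelman transformations attached to charges with vanishing symplectic pairing (Lemma 3.12 / Lemma 27 of the paper, in the concrete power series model): Let γ₁ = (a₁,b₁) and γ₂ = (a₂,b₂) be nonzero elements of ℕ² with a₁·b₂ − a₂·b₁ = 0, and let c₁, c₂ ∈ ℚ. For i = 1,2, let K_i be the substitution ℚ-algebra endomorphism of ℚ[[x,y]] determined by x ↦ x·(1 + c_i·x^{a_i}·y^{b_i})^{−b_i} and y ↦ y·(1 + c_i·x^{a_i}·y^{b_i})^{a_i} (well defined since 1 + c_i·x^{a_i}·y^{b_i} is a unit of ℚ[[x,y]] and the assigned images of the variables have zero constant term). Then K₁ ∘ K₂ = K₂ ∘ K₁. -/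
private noncomputable def Nvec (n : ℕ) : Fin 2 →₀ ℕ :=
  Finsupp.equivFunOnFinite.symm fun _ => n

private lemma Nvec_apply (n : ℕ) (i : Fin 2) : Nvec n i = n := rfl

private lemma theta_fixes_unit
    (θ : MvPowerSeries (Fin 2) ℚ →ₐ[ℚ] MvPowerSeries (Fin 2) ℚ)
    (u v : (MvPowerSeries (Fin 2) ℚ)ˣ) (a b p q : ℕ) (c : ℚ)
    (hv : (v : MvPowerSeries (Fin 2) ℚ)
      = 1 + MvPowerSeries.C (σ := Fin 2) (R := ℚ) c * MvPowerSeries.X 0 ^ a * MvPowerSeries.X 1 ^ b)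
    (hθx : θ (MvPowerSeries.X 0)
      = MvPowerSeries.X 0 * ((u ^ (-(q : ℤ)) : (MvPowerSeries (Fin 2) ℚ)ˣ) : MvPowerSeries (Fin 2) ℚ))
    (hθy : θ (MvPowerSeries.X 1)
      = MvPowerSeries.X 1 * ((u ^ (p : ℤ) : (MvPowerSeries (Fin 2) ℚ)ˣ) : MvPowerSeries (Fin 2) ℚ))
    (hexp : (-(q:ℤ)) * a + (p:ℤ) * b = 0) :
    θ (v : MvPowerSeries (Fin 2) ℚ) = v := by
  set U := ((u ^ (-(q:ℤ)) : (MvPowerSeries (Fin 2) ℚ)ˣ) : MvPowerSeries (Fin 2) ℚ)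
  set V := ((u ^ ((p:ℤ)) : (MvPowerSeries (Fin 2) ℚ)ˣ) : MvPowerSeries (Fin 2) ℚ)
  have key : U ^ a * V ^ b = 1 := by
    rw [← Units.val_pow_eq_pow_val, ← Units.val_pow_eq_pow_val, ← Units.val_mul,
      ← zpow_natCast (u ^ (-(q:ℤ))) a, ← zpow_natCast (u ^ ((p:ℤ))) b,
      ← zpow_mul, ← zpow_mul, ← zpow_add, hexp, zpow_zero, Units.val_one]
  have hC : θ (MvPowerSeries.C (σ := Fin 2) (R := ℚ) c) = MvPowerSeries.C (σ := Fin 2) (R := ℚ) c := by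
    rw [MvPowerSeries.c_eq_algebraMap]; exact θ.commutes c
  have expand : (MvPowerSeries.X 0 * U) ^ a * (MvPowerSeries.X (R := ℚ) 1 * V) ^ b
      = MvPowerSeries.X 0 ^ a * MvPowerSeries.X 1 ^ b := by
    calc (MvPowerSeries.X 0 * U) ^ a * (MvPowerSeries.X (R := ℚ) 1 * V) ^ b
        = MvPowerSeries.X 0 ^ a * MvPowerSeries.X 1 ^ b * (U ^ a * V ^ b) := by ring
      _ = _ := by rw [key, mul_one]
  rw [hv, map_add, map_one, map_mul, map_mul, map_pow, map_pow, hC, hθx, hθy,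
    mul_assoc, expand, ← mul_assoc]

private lemma theta_fixes_unit_zpow
    (θ : MvPowerSeries (Fin 2) ℚ →ₐ[ℚ] MvPowerSeries (Fin 2) ℚ)
    (v : (MvPowerSeries (Fin 2) ℚ)ˣ)
    (hfix : θ (v : MvPowerSeries (Fin 2) ℚ) = v) (m : ℤ) :
    θ ((v ^ m : (MvPowerSeries (Fin 2) ℚ)ˣ) : MvPowerSeries (Fin 2) ℚ)
      = ((v ^ m : (MvPowerSeries (Fin 2) ℚ)ˣ) : MvPowerSeries (Fin 2) ℚ) := by
  have hmap : Units.map (θ : MvPowerSeries (Fin 2) ℚ →* MvPowerSeries (Fin 2) ℚ) v = v :=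
    Units.ext (by simpa using hfix)
  have := congrArg (Units.val) (congrArg (· ^ m) hmap)
  simpa [← map_zpow] using this

private lemma comp_cont_trunc
    (θ₁ θ₂ : MvPowerSeries (Fin 2) ℚ →ₐ[ℚ] MvPowerSeries (Fin 2) ℚ)
    (h₁ : AdicContinuous θ₁) (h₂ : AdicContinuous θ₂)
    (f : MvPowerSeries (Fin 2) ℚ) (m : Fin 2 →₀ ℕ) (n : ℕ) (hn : m 0 + m 1 < n) :
    MvPowerSeries.coeff m (θ₁ (θ₂ f)) =
      MvPowerSeries.coeff m (θ₁ (θ₂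
        ((MvPowerSeries.trunc ℚ (Nvec (2 * n + 1)) f : MvPolynomial (Fin 2) ℚ) :
          MvPowerSeries (Fin 2) ℚ))) := by
  have htr : MvPowerSeries.trunc ℚ (Nvec n) (θ₂ f)
      = MvPowerSeries.trunc ℚ (Nvec n) (θ₂
        ((MvPowerSeries.trunc ℚ (Nvec (2 * n + 1)) f : MvPolynomial (Fin 2) ℚ) :
          MvPowerSeries (Fin 2) ℚ)) := by
    apply MvPolynomial.ext
    intro m'
    rw [MvPowerSeries.coeff_trunc, MvPowerSeries.coeff_trunc]
    split_ifs with h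
    · have hle : m' ≤ Nvec n := le_of_lt h
      have h0 : m' 0 ≤ n := by simpa [Nvec_apply] using hle 0
      have h1 : m' 1 ≤ n := by simpa [Nvec_apply] using hle 1
      exact h₂ f m' (2 * n + 1) (by omega)
    · rfl
  calc MvPowerSeries.coeff m (θ₁ (θ₂ f))
      = MvPowerSeries.coeff m (θ₁
          ((MvPowerSeries.trunc ℚ (Nvec n) (θ₂ f) : MvPolynomial (Fin 2) ℚ) :
            MvPowerSeries (Fin 2) ℚ)) := h₁ (θ₂ f) m n hn
    _ = _ := by rw [htr]; exact (h₁ _ m n hn).symm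

private lemma agree_on_poly
    (A B : MvPowerSeries (Fin 2) ℚ →ₐ[ℚ] MvPowerSeries (Fin 2) ℚ)
    (hx : A (MvPowerSeries.X 0) = B (MvPowerSeries.X 0))
    (hy : A (MvPowerSeries.X 1) = B (MvPowerSeries.X 1))
    (p : MvPolynomial (Fin 2) ℚ) :
    A (p : MvPowerSeries (Fin 2) ℚ) = B (p : MvPowerSeries (Fin 2) ℚ) := by
  have hcoe : ∀ q : MvPolynomial (Fin 2) ℚ,
      MvPolynomial.coeToMvPowerSeries.algHom (σ := Fin 2) (R := ℚ) ℚ q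
        = (q : MvPowerSeries (Fin 2) ℚ) := by
    intro q
    rw [MvPolynomial.coeToMvPowerSeries.algHom_apply]
    simp [MvPowerSeries.map_id]
  have := MvPolynomial.algHom_ext
    (f := A.comp (MvPolynomial.coeToMvPowerSeries.algHom (σ := Fin 2) (R := ℚ) ℚ))
    (g := B.comp (MvPolynomial.coeToMvPowerSeries.algHom (σ := Fin 2) (R := ℚ) ℚ))
    (fun i => by
      fin_cases i <;>
        simp only [AlgHom.comp_apply, hcoe, MvPolynomial.coe_X] <;>
        [exact hx; exact hy])
  have := congrArg (fun φ => φ p) this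
  simpa [hcoe] using this

/-- **Commutativity of Kontsevich–Soibelman transformations attached to charges
with vanishing symplectic pairing** (Lemma 27 of the paper).  Let
`γᵢ = (aᵢ, bᵢ)` be nonzero elements of `ℕ²` with `a₁·b₂ − a₂·b₁ = 0`, let
`cᵢ ∈ ℚ`, and for `i = 1,2` let `Kᵢ` be the substitution (continuous)
`ℚ`-algebra endomorphism of `ℚ[[x,y]]` with
`x ↦ x·(1 + cᵢ·x^{aᵢ}·y^{bᵢ})^{−bᵢ}` and `y ↦ y·(1 + cᵢ·x^{aᵢ}·y^{bᵢ})^{aᵢ}`.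
Then `K₁ ∘ K₂ = K₂ ∘ K₁`. -/
theorem KS_transformations_commute
    (a₁ b₁ a₂ b₂ : ℕ) (h₁ : (a₁, b₁) ≠ (0, 0)) (h₂ : (a₂, b₂) ≠ (0, 0))
    (hcol : (a₁ : ℤ) * (b₂ : ℤ) - (a₂ : ℤ) * (b₁ : ℤ) = 0)
    (c₁ c₂ : ℚ)
    (u₁ u₂ : (MvPowerSeries (Fin 2) ℚ)ˣ)
    (hu₁ : (u₁ : MvPowerSeries (Fin 2) ℚ)
      = 1 + MvPowerSeries.C (σ := Fin 2) (R := ℚ) c₁ *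
          MvPowerSeries.X 0 ^ a₁ * MvPowerSeries.X 1 ^ b₁)
    (hu₂ : (u₂ : MvPowerSeries (Fin 2) ℚ)
      = 1 + MvPowerSeries.C (σ := Fin 2) (R := ℚ) c₂ *
          MvPowerSeries.X 0 ^ a₂ * MvPowerSeries.X 1 ^ b₂)
    (K₁ K₂ : MvPowerSeries (Fin 2) ℚ →ₐ[ℚ] MvPowerSeries (Fin 2) ℚ)
    (hK₁c : AdicContinuous K₁) (hK₂c : AdicContinuous K₂)
    (hK₁x : K₁ (MvPowerSeries.X 0)
      = MvPowerSeries.X 0 *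
          ((u₁ ^ (-(b₁ : ℤ)) : (MvPowerSeries (Fin 2) ℚ)ˣ) : MvPowerSeries (Fin 2) ℚ))
    (hK₁y : K₁ (MvPowerSeries.X 1)
      = MvPowerSeries.X 1 *
          ((u₁ ^ (a₁ : ℤ) : (MvPowerSeries (Fin 2) ℚ)ˣ) : MvPowerSeries (Fin 2) ℚ))
    (hK₂x : K₂ (MvPowerSeries.X 0)
      = MvPowerSeries.X 0 *
          ((u₂ ^ (-(b₂ : ℤ)) : (MvPowerSeries (Fin 2) ℚ)ˣ) : MvPowerSeries (Fin 2) ℚ))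
    (hK₂y : K₂ (MvPowerSeries.X 1)
      = MvPowerSeries.X 1 *
          ((u₂ ^ (a₂ : ℤ) : (MvPowerSeries (Fin 2) ℚ)ˣ) : MvPowerSeries (Fin 2) ℚ)) :
    K₁.comp K₂ = K₂.comp K₁ := by
  -- `K₁` fixes `u₂` and `K₂` fixes `u₁`, by colinearity of the charges.
  have hfix12 : K₁ (u₂ : MvPowerSeries (Fin 2) ℚ) = u₂ :=
    theta_fixes_unit K₁ u₁ u₂ a₂ b₂ a₁ b₁ c₂ hu₂ hK₁x hK₁y (by linarith)
  have hfix21 : K₂ (u₁ : MvPowerSeries (Fin 2) ℚ) = u₁ :=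
    theta_fixes_unit K₂ u₂ u₁ a₁ b₁ a₂ b₂ c₁ hu₁ hK₂x hK₂y (by linarith)
  -- consequently the compositions agree on the variables
  have hx : (K₁.comp K₂) (MvPowerSeries.X 0) = (K₂.comp K₁) (MvPowerSeries.X 0) := by
    simp only [AlgHom.comp_apply, hK₁x, hK₂x, map_mul]
    rw [theta_fixes_unit_zpow K₁ u₂ hfix12, theta_fixes_unit_zpow K₂ u₁ hfix21]
    ring
  have hy : (K₁.comp K₂) (MvPowerSeries.X 1) = (K₂.comp K₁) (MvPowerSeries.X 1) := by
    simp only [AlgHom.comp_apply, hK₁y, hK₂y, map_mul]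
    rw [theta_fixes_unit_zpow K₁ u₂ hfix12, theta_fixes_unit_zpow K₂ u₁ hfix21]
    ring
  -- hence they agree on all polynomials, and by continuity on all power series
  apply AlgHom.ext
  intro f
  apply MvPowerSeries.ext
  intro m
  have hn : m 0 + m 1 < m 0 + m 1 + 1 := Nat.lt_succ_self _
  rw [AlgHom.comp_apply, AlgHom.comp_apply,
    comp_cont_trunc K₁ K₂ hK₁c hK₂c f m (m 0 + m 1 + 1) hn,
    comp_cont_trunc K₂ K₁ hK₂c hK₁c f m (m 0 + m 1 + 1) hn]
  have := agree_on_poly (K₁.comp K₂) (K₂.comp K₁) hx hy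
    (MvPowerSeries.trunc ℚ (Nvec (2 * (m 0 + m 1 + 1) + 1)) f)
  simp only [AlgHom.comp_apply] at this
  rw [this]
end
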